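/- Fix integers n ≥ 1 and k ≥ 1. The ideal of E_n generated by the germs of the monomials x_1^k, …, x_n^k contains the ideal m_n^{n(k−1)+1}. Consequently, the Jacobian ideal of the germ r = x_1^{k+1} + … + x_n^{k+1} equals the ideal generated by x_1^k, …, x_n^k, and the codimension of r is at most a_k := dim_ℝ(m_n/m_n^{n(k−1)+1}), which is finite. -/

import Mathlib

open Filter Topology
open scoped ContDiff

set_option synthInstance.maxHeartbeats 400000

noncomputable section

/-- The value at `0` of a germ at `𝓝 (0 : ℝⁿ)`. -/
def germValue {n : ℕ} (φ : Filter.Germ (nhds (0 : Fin n → ℝ)) ℝ) : ℝ :=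
  Filter.Germ.liftOn φ (fun f => f 0) fun _ _ h => h.eq_of_nhds

@[simp] lemma germValue_coe {n : ℕ} (f : (Fin n → ℝ) → ℝ) :
    germValue (↑f : Filter.Germ (nhds (0 : Fin n → ℝ)) ℝ) = f 0 := rfl

/-- `E_n`: the ring of germs at `0` of smooth real-valued functions on `ℝⁿ`,
realized as a subring of the ring of all germs at `0`. -/
def En (n : ℕ) : Subring (Filter.Germ (nhds (0 : Fin n → ℝ)) ℝ) where
  carrier := {φ | ∃ f : (Fin n → ℝ) → ℝ, ContDiff ℝ ∞ f ∧ φ = ↑f}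
  mul_mem' := by
    rintro a b ⟨f, hf, rfl⟩ ⟨g, hg, rfl⟩
    exact ⟨f * g, hf.mul hg, (Filter.Germ.coe_mul f g).symm⟩
  one_mem' := ⟨1, contDiff_const, rfl⟩
  add_mem' := by
    rintro a b ⟨f, hf, rfl⟩ ⟨g, hg, rfl⟩
    exact ⟨f + g, hf.add hg, (Filter.Germ.coe_add f g).symm⟩
  zero_mem' := ⟨0, contDiff_const, rfl⟩
  neg_mem' := by
    rintro a ⟨f, hf, rfl⟩
    exact ⟨-f, hf.neg, (Filter.Germ.coe_neg f).symm⟩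

lemma mem_En_iff {n : ℕ} {φ : Filter.Germ (nhds (0 : Fin n → ℝ)) ℝ} :
    φ ∈ En n ↔ ∃ f : (Fin n → ℝ) → ℝ, ContDiff ℝ ∞ f ∧ φ = ↑f := Iff.rfl

/-- The germ of a smooth function, as an element of `E_n`. -/
def germOf {n : ℕ} (f : (Fin n → ℝ) → ℝ) (hf : ContDiff ℝ ∞ f) : En n :=
  ⟨↑f, f, hf, rfl⟩

/-- The inclusion of `ℝ` in `E_n` as constant germs. -/
def constHom (n : ℕ) : ℝ →+* En n where
  toFun c := germOf (fun _ => c) contDiff_const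
  map_one' := rfl
  map_mul' a b := by
    apply Subtype.ext
    exact (Filter.Germ.coe_mul _ _).symm
  map_zero' := rfl
  map_add' a b := by
    apply Subtype.ext
    exact (Filter.Germ.coe_add _ _).symm

instance EnAlgebra (n : ℕ) : Algebra ℝ (En n) := (constHom n).toAlgebra

/-- The maximal ideal `m_n` of `E_n`: germs vanishing at the origin. -/
def mId (n : ℕ) : Ideal (En n) where
  carrier := {φ | germValue (φ : Filter.Germ (nhds (0 : Fin n → ℝ)) ℝ) = 0}
  add_mem' := by
    rintro ⟨a, f, hf, rfl⟩ ⟨b, g, hg, rfl⟩ ha hb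
    have : ((⟨↑f, _, hf, rfl⟩ : En n) + ⟨↑g, _, hg, rfl⟩ : En n).1
        = ((↑(f + g) : Filter.Germ (nhds (0 : Fin n → ℝ)) ℝ)) := (Filter.Germ.coe_add f g).symm
    show germValue _ = 0
    rw [this, germValue_coe]
    simpa using by
      have ha' : f 0 = 0 := by simpa using ha
      have hb' : g 0 = 0 := by simpa using hb
      show f 0 + g 0 = 0
      rw [ha', hb', add_zero]
  zero_mem' := by simp [germValue]; rfl
  smul_mem' := by
    rintro ⟨c, g, hg, rfl⟩ ⟨x, f, hf, rfl⟩ hx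
    have hx' : f 0 = 0 := by simpa using hx
    show germValue _ = 0
    have : ((⟨↑g, _, hg, rfl⟩ : En n) * ⟨↑f, _, hf, rfl⟩ : En n).1
        = ((↑(g * f) : Filter.Germ (nhds (0 : Fin n → ℝ)) ℝ)) := (Filter.Germ.coe_mul g f).symm
    rw [smul_eq_mul, this, germValue_coe]
    show g 0 * f 0 = 0
    rw [hx', mul_zero]

/-- The `i`-th partial derivative of a function on `ℝⁿ`. -/
def pd {n : ℕ} (i : Fin n) (f : (Fin n → ℝ) → ℝ) : (Fin n → ℝ) → ℝ :=
  fun x => fderiv ℝ f x (Pi.single i 1)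

/-- The ideal of `E_n` generated by the germs at `0` of a set of functions. -/
def gSpan (n : ℕ) (S : Set ((Fin n → ℝ) → ℝ)) : Ideal (En n) :=
  Ideal.span {φ : En n | ∃ f ∈ S, (φ : Filter.Germ (nhds (0 : Fin n → ℝ)) ℝ) = ↑f}

/-- The Jacobian ideal of (the germ at `0` of) a function `f` on `ℝⁿ`:
the ideal of `E_n` generated by the germs of the partial derivatives of `f`. -/
def JId (n : ℕ) (f : (Fin n → ℝ) → ℝ) : Ideal (En n) :=
  gSpan n (Set.range fun i : Fin n => pd i f)

instance EnModR (n : ℕ) : Module ℝ (En n) := Algebra.toModule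

instance EnTowerSelf (n : ℕ) : IsScalarTower ℝ (En n) (En n) := IsScalarTower.right

instance EnIdealTower (n : ℕ) (I : Ideal (En n)) : IsScalarTower ℝ (En n) ↥I :=
  Submodule.isScalarTower I

instance EnIdealModule (n : ℕ) (I : Ideal (En n)) : Module ℝ ↥I := Submodule.module' I

instance EnIdealQuotModule (n : ℕ) (I : Ideal (En n)) (N : Submodule (En n) ↥I) :
    Module ℝ (↥I ⧸ N) := Submodule.Quotient.module' N

/-- The dimension (a cardinal) of the real vector space `m_n / J`,
for an ideal `J` of `E_n` (intended: `J ⊆ m_n`). -/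
def quotDim (n : ℕ) (J : Ideal (En n)) : Cardinal :=
  Module.rank ℝ (↥(mId n) ⧸ Submodule.comap (mId n).subtype (J : Submodule (En n) (En n)))

/-- The codimension of the germ at `0` of `f : ℝⁿ → ℝ`: `dim_ℝ (m_n / J(f))`. -/
def codim (n : ℕ) (f : (Fin n → ℝ) → ℝ) : Cardinal := quotDim n (JId n f)

/-! Hadamard's lemma `g(x) = ∫₀¹ Dg(tx)·x dt` shows that `m_n` is generated by the coordinate
germs, so `m_n^N` is generated by the products of `N` coordinates. When `N = n(k-1)+1`, by
pigeonhole one coordinate occurs at least `k` times in such a product, which is then a multiple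
of some `x_i^k`. The partials of `r` are `(k+1)x_i^k`, which gives the Jacobian ideal, and the
inclusion bounds the codimension. Finiteness holds because `E_n/m_n ≅ ℝ` and `m_n` is finitely
generated, so the kernel of `E_n/m_n^N → E_n/m_n` is a finitely generated nilpotent ideal. -/

open Metric

universe u

section ParametricIntegral

variable {E : Type u} [NormedAddCommGroup E] [NormedSpace ℝ E] [ProperSpace E]

-- `V` is quantified inside so that the induction can pass from `V` to `E →L[ℝ] V`.
theorem contDiff_intervalIntegral_of_contDiff_uncurry (m : ℕ) :
    ∀ {V : Type u} [NormedAddCommGroup V] [NormedSpace ℝ V] [CompleteSpace V]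
      {F : E → ℝ → V}, ContDiff ℝ ∞ (Function.uncurry F) →
      ContDiff ℝ m fun x => ∫ t in (0 : ℝ)..1, F x t := by
  induction m with
  | zero =>
    intro V _ _ _ F hF
    rw [Nat.cast_zero, contDiff_zero]
    exact intervalIntegral.continuous_parametric_intervalIntegral_of_continuous' hF.continuous 0 1
  | succ m ih =>
    intro V _ _ _ F hF
    set F' : E → ℝ → E →L[ℝ] V := fun x t => fderiv ℝ (fun y => F y t) x
    have hF' : ContDiff ℝ ∞ (Function.uncurry F') :=
      ContDiff.fderiv (f := fun p y => F y p.2) (hF.comp (contDiff_snd.prodMk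
        (contDiff_snd.comp contDiff_fst))) contDiff_fst le_rfl
    have hslice : ∀ t, ContDiff ℝ ∞ fun y => F y t := fun t =>
      hF.comp (contDiff_id.prodMk contDiff_const)
    have hderiv : ∀ x₀, HasFDerivAt (fun x => ∫ t in (0 : ℝ)..1, F x t)
        (∫ t in (0 : ℝ)..1, F' x₀ t) x₀ := by
      intro x₀
      obtain ⟨C, hC⟩ : ∃ C, ∀ p ∈ closedBall x₀ 1 ×ˢ Set.uIcc (0 : ℝ) 1,
          ‖Function.uncurry F' p‖ ≤ C :=
        ((isCompact_closedBall x₀ 1).prod isCompact_uIcc).exists_bound_of_continuousOn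
          hF'.continuous.continuousOn
      have hcont : ∀ x, Continuous (F x) := fun x =>
        hF.continuous.comp (continuous_const.prodMk continuous_id)
      refine intervalIntegral.hasFDerivAt_integral_of_dominated_of_fderiv_le
        (bound := fun _ => C) (ball_mem_nhds x₀ one_pos)
        (Eventually.of_forall fun x => (hcont x).aestronglyMeasurable)
        ((hcont x₀).intervalIntegrable 0 1)
        (hF'.continuous.comp (continuous_const.prodMk continuous_id)).aestronglyMeasurable
        (Eventually.of_forall fun t ht x hx =>
          hC (x, t) ⟨ball_subset_closedBall hx, Set.uIoc_subset_uIcc ht⟩)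
        intervalIntegrable_const
        (Eventually.of_forall fun t _ x _ => ?_)
      exact ((hslice t).differentiable (by simp) x).hasFDerivAt
    rw [Nat.cast_succ, contDiff_succ_iff_fderiv]
    refine ⟨fun x => (hderiv x).differentiableAt, by simp, ?_⟩
    rw [funext fun x => (hderiv x).fderiv]
    exact ih hF'

theorem ContDiff.intervalIntegral_uncurry {V : Type u} [NormedAddCommGroup V] [NormedSpace ℝ V]
    [CompleteSpace V] {F : E → ℝ → V} (hF : ContDiff ℝ ∞ (Function.uncurry F)) :
    ContDiff ℝ ∞ fun x => ∫ t in (0 : ℝ)..1, F x t :=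
  contDiff_infty.2 fun m => contDiff_intervalIntegral_of_contDiff_uncurry m hF

end ParametricIntegral

theorem exists_contDiff_clm_eq_apply_self {E F : Type u} [NormedAddCommGroup E]
    [NormedSpace ℝ E] [ProperSpace E] [NormedAddCommGroup F] [NormedSpace ℝ F] [CompleteSpace F]
    {g : E → F} (hg : ContDiff ℝ ∞ g) (h0 : g 0 = 0) :
    ∃ h : E → E →L[ℝ] F, ContDiff ℝ ∞ h ∧ ∀ x, g x = h x x := by
  have hDg : ContDiff ℝ ∞ (fun p : E × ℝ => fderiv ℝ g (p.2 • p.1)) :=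
    (hg.fderiv_right le_rfl).comp (contDiff_snd.smul contDiff_fst)
  refine ⟨fun x => ∫ t in (0 : ℝ)..1, fderiv ℝ g (t • x), hDg.intervalIntegral_uncurry,
    fun x => ?_⟩
  have hcont : Continuous fun t : ℝ => fderiv ℝ g (t • x) :=
    hDg.continuous.comp (continuous_const.prodMk continuous_id)
  have hline : ∀ t : ℝ, HasDerivAt (fun s : ℝ => g (s • x)) (fderiv ℝ g (t • x) x) t :=
    fun t => (hg.differentiable (by simp) _).hasFDerivAt.comp_hasDerivAt t
      ((hasDerivAt_id t).smul_const x |>.congr_deriv (one_smul ℝ x))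
  rw [ContinuousLinearMap.intervalIntegral_apply (hcont.intervalIntegrable 0 1),
    intervalIntegral.integral_eq_sub_of_hasDerivAt (fun t _ => hline t)
      ((hcont.clm_apply continuous_const).intervalIntegrable 0 1)]
  simp [h0]

theorem Ideal.span_range_pow_le_span_range_pow {R ι : Type*} [CommSemiring R] [Fintype ι]
    (x : ι → R) (k : ℕ) :
    Ideal.span (Set.range x) ^ (Fintype.card ι * k + 1)
      ≤ Ideal.span (Set.range fun i => x i ^ (k + 1)) := by
  classical
  rw [Ideal.span, Submodule.span_pow, ← Ideal.span, Ideal.span_le]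
  intro a ha
  obtain ⟨f, rfl⟩ := Set.mem_pow.1 ha
  choose c hc using fun j => (f j).2
  obtain ⟨i, hi⟩ := Fintype.exists_lt_card_fiber_of_mul_lt_card c (n := k) (by simp)
  have hdvd : x i ^ (k + 1) ∣ (List.ofFn fun j => (f j : R)).prod := by
    rw [List.prod_ofFn, ← Finset.prod_filter_mul_prod_filter_not _ (fun j => c j = i),
      Finset.prod_eq_pow_card fun j hj => by rw [← hc, (Finset.mem_filter.1 hj).2]]
    exact (pow_dvd_pow _ hi).mul_right _
  exact Ideal.mem_of_dvd _ hdvd (Ideal.subset_span ⟨i, rfl⟩)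

theorem Module.Finite.quotient_pow {K R : Type*} [CommRing K] [CommRing R]
    [Algebra K R] {I : Ideal R} (hI : I.FG) [Module.Finite K (R ⧸ I)] :
    ∀ N : ℕ, Module.Finite K (R ⧸ I ^ N)
  | 0 => by
    rw [pow_zero, Ideal.one_eq_top]
    infer_instance
  | N + 1 => by
    have hle : I ^ (N + 1) ≤ I := Ideal.pow_le_self N.succ_ne_zero
    have hker : RingHom.ker (Ideal.Quotient.factorₐ K hle) = I.map (Ideal.Quotient.mk _) :=
      Ideal.Quotient.factor_ker hle
    refine Module.finite_of_surjective_of_ker_le_nilradical (Ideal.Quotient.factorₐ K hle)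
      (Ideal.Quotient.factor_surjective hle) ?_ (hker ▸ hI.map _)
    rw [hker, Ideal.map_le_iff_le_comap]
    intro a ha
    exact ⟨N + 1, by
      simpa [← map_pow, Ideal.Quotient.eq_zero_iff_mem] using Ideal.pow_mem_pow ha _⟩

theorem rank_quotient_comap_subtype_le {K R : Type*} [CommRing K] [CommRing R] [Algebra K R]
    (I J : Ideal R) :
    Module.rank K (I ⧸ Submodule.comap I.subtype (J : Submodule R R))
      ≤ Module.rank K (R ⧸ J) := by
  have hker : Submodule.comap I.subtype (J : Submodule R R)
      = LinearMap.ker (J.mkQ ∘ₗ I.subtype) := by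
    rw [LinearMap.ker_comp, Submodule.ker_mkQ]
  let g := (Submodule.comap I.subtype (J : Submodule R R)).liftQ _ hker.le
  have hg : Function.Injective g := LinearMap.ker_eq_bot.1 (Submodule.ker_liftQ_eq_bot' _ _ hker)
  exact LinearMap.rank_le_of_injective (g.restrictScalars K) hg

section Germs

variable {n : ℕ}

def evalZero (n : ℕ) : En n →ₐ[ℝ] ℝ where
  toFun φ := germValue (φ : Filter.Germ (𝓝 (0 : Fin n → ℝ)) ℝ)
  map_one' := rfl
  map_mul' := by
    rintro ⟨_, f, -, rfl⟩ ⟨_, g, -, rfl⟩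
    rfl
  map_zero' := rfl
  map_add' := by
    rintro ⟨_, f, -, rfl⟩ ⟨_, g, -, rfl⟩
    rfl
  commutes' _ := rfl

theorem mem_mId_iff {φ : En n} : φ ∈ mId n ↔ evalZero n φ = 0 := Iff.rfl

theorem germOf_mul {f g : (Fin n → ℝ) → ℝ} (hf : ContDiff ℝ ∞ f)
    (hg : ContDiff ℝ ∞ g) :
    germOf (f * g) (hf.mul hg) = germOf f hf * germOf g hg := rfl

theorem germOf_sum {ι : Type*} (s : Finset ι) {f : ι → (Fin n → ℝ) → ℝ}
    (hf : ∀ i, ContDiff ℝ ∞ (f i)) :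
    germOf (fun x => ∑ i ∈ s, f i x) (ContDiff.sum fun i _ => hf i)
      = ∑ i ∈ s, germOf (f i) (hf i) := by
  classical
  induction s using Finset.induction_on with
  | empty => rfl
  | insert i s hi ih => simp only [Finset.sum_insert hi, ← ih]; rfl

theorem germOf_const_mul (c : ℝ) {f : (Fin n → ℝ) → ℝ} (hf : ContDiff ℝ ∞ f) :
    germOf (fun x => c * f x) (contDiff_const.mul hf) = algebraMap ℝ (En n) c * germOf f hf := rfl

theorem contDiff_coord (i : Fin n) : ContDiff ℝ ∞ fun x : Fin n → ℝ => x i :=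
  contDiff_apply ℝ ℝ i

def coordGerm (n : ℕ) (i : Fin n) : En n := germOf (fun x => x i) (contDiff_coord i)

theorem coordGerm_pow (i : Fin n) (k : ℕ) :
    coordGerm n i ^ k = germOf (fun x => x i ^ k) ((contDiff_coord i).pow k) :=
  Subtype.ext (Filter.Germ.coe_pow (fun x : Fin n → ℝ => x i) k).symm

theorem gSpan_range_eq_span {ι : Type*} {f : ι → (Fin n → ℝ) → ℝ}
    (hf : ∀ i, ContDiff ℝ ∞ (f i)) :
    gSpan n (Set.range f) = Ideal.span (Set.range fun i => germOf (f i) (hf i)) := by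
  refine congrArg Ideal.span (Set.ext fun φ => ⟨?_, ?_⟩)
  · rintro ⟨_, ⟨i, rfl⟩, hφ⟩
    exact ⟨i, Subtype.ext hφ.symm⟩
  · rintro ⟨i, rfl⟩
    exact ⟨f i, ⟨i, rfl⟩, rfl⟩

theorem mId_eq_span_coordGerm : mId n = Ideal.span (Set.range (coordGerm n)) := by
  refine le_antisymm ?_ (Ideal.span_le.2 ?_)
  · rintro ⟨_, f, hf, rfl⟩ hf0
    obtain ⟨h, hh, hfh⟩ := exists_contDiff_clm_eq_apply_self hf hf0
    have hsmooth : ∀ i, ContDiff ℝ ∞ fun x => h x (Pi.single i 1) := fun i =>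
      hh.clm_apply contDiff_const
    have hexp : f = fun x => ∑ i, x i * h x (Pi.single i 1) := by
      ext x
      have hx : x = ∑ i, x i • (Pi.single i 1 : Fin n → ℝ) := by
        ext j
        simp [Finset.sum_apply, Pi.single_apply]
      rw [hfh x]
      nth_rewrite 2 [hx]
      simp
    have : (⟨↑f, f, hf, rfl⟩ : En n) = ∑ i, coordGerm n i * germOf _ (hsmooth i) := by
      simp only [coordGerm, ← germOf_mul]
      rw [← germOf_sum]
      subst hexp
      rfl
    rw [this]
    exact Ideal.sum_mem _ fun i _ => Ideal.mul_mem_right _ _ (Ideal.subset_span ⟨i, rfl⟩)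
  · rintro _ ⟨i, rfl⟩
    rfl

theorem mId_fg : (mId n).FG :=
  mId_eq_span_coordGerm ▸ Submodule.fg_span (Set.finite_range _)

instance : Module.Finite ℝ (En n ⧸ mId n) := by
  refine Module.Finite.of_surjective (Algebra.linearMap ℝ _) fun q => ?_
  obtain ⟨a, rfl⟩ := Ideal.Quotient.mk_surjective q
  refine ⟨evalZero n a, ?_⟩
  rw [Algebra.linearMap_apply, ← Ideal.Quotient.mk_algebraMap, Ideal.Quotient.eq, mem_mId_iff,
    map_sub, AlgHom.commutes, Algebra.algebraMap_self, RingHom.id_apply, sub_self]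

instance (N : ℕ) : Module.Finite ℝ (En n ⧸ mId n ^ N) :=
  Module.Finite.quotient_pow mId_fg N

theorem quotDim_antitone {I J : Ideal (En n)} (h : I ≤ J) : quotDim n J ≤ quotDim n I := by
  set p := Submodule.comap (mId n).subtype (I : Submodule (En n) (En n))
  set q := Submodule.comap (mId n).subtype (J : Submodule (En n) (En n))
  have hpq : p ≤ q := Submodule.comap_mono h
  exact LinearMap.rank_le_of_surjective ((Submodule.factor hpq).restrictScalars ℝ)
    (Submodule.factor_surjective hpq)

theorem quotDim_lt_aleph0 (J : Ideal (En n)) [Module.Finite ℝ (En n ⧸ J)] :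
    quotDim n J < Cardinal.aleph0 :=
  (rank_quotient_comap_subtype_le _ _).trans_lt (Module.rank_lt_aleph0 _ _)

end Germs

section Jacobian

variable {n : ℕ}

theorem pd_sum_pow (k : ℕ) (i : Fin n) :
    pd i (fun x : Fin n → ℝ => ∑ j, x j ^ (k + 1))
      = fun x : Fin n → ℝ => ((k : ℝ) + 1) * x i ^ k := by
  funext x
  have hderiv : HasFDerivAt (fun x : Fin n → ℝ => ∑ j, x j ^ (k + 1))
      (∑ j, (((k + 1 : ℕ) : ℝ) * x j ^ (k + 1 - 1)) •
        (ContinuousLinearMap.proj j : (Fin n → ℝ) →L[ℝ] ℝ)) x := by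
    refine HasFDerivAt.fun_sum fun j _ => ?_
    exact (hasDerivAt_pow (k + 1) (x j)).comp_hasFDerivAt x (hasFDerivAt_apply (𝕜 := ℝ) j x)
  simp [pd, hderiv.fderiv, Pi.single_apply]

theorem JId_sum_pow (k : ℕ) :
    JId n (fun x : Fin n → ℝ => ∑ i, x i ^ (k + 1))
      = gSpan n (Set.range fun i : Fin n => fun x : Fin n → ℝ => x i ^ k) := by
  have hunit : IsUnit (algebraMap ℝ (En n) (k + 1)) :=
    (isUnit_iff_ne_zero.2 (by positivity)).map _
  rw [JId, funext (pd_sum_pow k),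
    gSpan_range_eq_span fun i => contDiff_const.mul ((contDiff_coord i).pow k),
    gSpan_range_eq_span fun i => (contDiff_coord i).pow k]
  refine Eq.trans ?_ (Submodule.span_smul_eq_of_isUnit _ _ hunit)
  rw [← Set.range_smul]
  exact congrArg Ideal.span (congrArg Set.range (funext fun i => germOf_const_mul _ _))

end Jacobian

theorem statement7_general (n k : ℕ) (hk : 1 ≤ k) :
    ((mId n) ^ (n * (k - 1) + 1) : Ideal (En n))
        ≤ gSpan n (Set.range fun i : Fin n => fun x : Fin n → ℝ => x i ^ k) ∧
      JId n (fun x : Fin n → ℝ => ∑ i : Fin n, x i ^ (k + 1))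
        = gSpan n (Set.range fun i : Fin n => fun x : Fin n → ℝ => x i ^ k) ∧
      codim n (fun x : Fin n → ℝ => ∑ i : Fin n, x i ^ (k + 1))
        ≤ quotDim n ((mId n) ^ (n * (k - 1) + 1)) ∧
      quotDim n ((mId n) ^ (n * (k - 1) + 1)) < Cardinal.aleph0 := by
  have hpow : mId n ^ (n * (k - 1) + 1)
      ≤ gSpan n (Set.range fun i : Fin n => fun x : Fin n → ℝ => x i ^ k) := by
    obtain ⟨k, rfl⟩ : ∃ j, k = j + 1 := ⟨k - 1, by omega⟩
    rw [Nat.add_sub_cancel, mId_eq_span_coordGerm,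
      gSpan_range_eq_span fun i => (contDiff_coord i).pow (k + 1)]
    simp_rw [← coordGerm_pow]
    simpa using Ideal.span_range_pow_le_span_range_pow (coordGerm n) k
  refine ⟨hpow, JId_sum_pow k, ?_, quotDim_lt_aleph0 _⟩
  rw [codim, JId_sum_pow]
  exact quotDim_antitone hpow

/-- The ideal of `E_n` generated by `x_1^k, …, x_n^k` contains
`m_n^{n(k-1)+1}`; the Jacobian ideal of `r = x_1^{k+1} + … + x_n^{k+1}` equals the ideal
generated by `x_1^k, …, x_n^k`; and the codimension of `r` is at most
`a_k = dim_ℝ(m_n/m_n^{n(k-1)+1})`, which is finite. -/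
theorem statement7 (n k : ℕ) (hn : 1 ≤ n) (hk : 1 ≤ k) :
    ((mId n) ^ (n * (k - 1) + 1) : Ideal (En n))
        ≤ gSpan n (Set.range fun i : Fin n => fun x : Fin n → ℝ => x i ^ k) ∧
      JId n (fun x : Fin n → ℝ => ∑ i : Fin n, x i ^ (k + 1))
        = gSpan n (Set.range fun i : Fin n => fun x : Fin n → ℝ => x i ^ k) ∧
      codim n (fun x : Fin n → ℝ => ∑ i : Fin n, x i ^ (k + 1))
        ≤ quotDim n ((mId n) ^ (n * (k - 1) + 1)) ∧
      quotDim n ((mId n) ^ (n * (k - 1) + 1)) < Cardinal.aleph0 :=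
  statement7_general n k hk
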